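/- Douglas's lemma: Let A : H → E and B : H → K be bounded operators between Hilbert spaces. If the range of A* is contained in the range of B*, then there exists a bounded operator L : K → E with A = L B. -/

import Mathlib

/-!
Replacing `A` and `B` by their adjoints, it suffices to factor `A†` through `B†`. Restricted to
`(ker B†)ᗮ`, the operator `B†` is injective with unchanged range, so `A† e` has a unique preimage
there; this defines a linear map `D` with `B† ∘ D = A†`, whose graph is closed because `A†` and
`B†` are continuous. By the closed graph theorem `D` is bounded, and `L := D†` satisfies
`A = L ∘ B`.
-/

namespace ContinuousLinearMap

section Banach

variable {𝕜 E K F : Type*} [NontriviallyNormedField 𝕜]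
  [NormedAddCommGroup E] [NormedSpace 𝕜 E] [CompleteSpace E]
  [NormedAddCommGroup K] [NormedSpace 𝕜 K] [CompleteSpace K]
  [NormedAddCommGroup F] [NormedSpace 𝕜 F]

theorem exists_comp_eq_of_injective_of_range_subset {T : K →L[𝕜] F} (hT : Function.Injective T)
    {S : E →L[𝕜] F} (h : Set.range S ⊆ Set.range T) : ∃ D : E →L[𝕜] K, T.comp D = S := by
  let D : E →ₗ[𝕜] K := (LinearEquiv.ofInjective (T : K →ₗ[𝕜] F) hT).symm.toLinearMap ∘ₗ
    (S : E →ₗ[𝕜] F).codRestrict (LinearMap.range (T : K →ₗ[𝕜] F)) fun e => h ⟨e, rfl⟩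
  have hTD : ∀ e, T (D e) = S e := fun e =>
    congrArg Subtype.val
      ((LinearEquiv.ofInjective (T : K →ₗ[𝕜] F) hT).apply_symm_apply ⟨S e, h ⟨e, rfl⟩⟩)
  have hD : Continuous D := D.continuous_of_seq_closed_graph fun u x y hu hDu => hT <| by
    rw [hTD]
    refine tendsto_nhds_unique ((T.continuous.tendsto y).comp hDu) ?_
    simpa only [Function.comp_def, LinearMap.comp_apply, hTD] using
      (S.continuous.tendsto x).comp hu
  exact ⟨⟨D, hD⟩, ext hTD⟩

end Banach

section Hilbert

variable {𝕜 E K F : Type*} [RCLike 𝕜]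
  [NormedAddCommGroup K] [InnerProductSpace 𝕜 K]
  [NormedAddCommGroup F] [NormedSpace 𝕜 F]

theorem injective_comp_subtypeL_orthogonal_ker (T : K →L[𝕜] F) :
    Function.Injective (T.comp T.kerᗮ.subtypeL) :=
  (injective_iff_map_eq_zero _).2 fun v hv =>
    Subtype.ext <| Submodule.disjoint_def.1 T.ker.orthogonal_disjoint v hv v.2

variable [CompleteSpace K]

theorem range_comp_subtypeL_orthogonal_ker (T : K →L[𝕜] F) :
    Set.range (T.comp T.kerᗮ.subtypeL) = Set.range T := by
  refine subset_antisymm (fun _ ⟨v, hv⟩ => ⟨v, hv⟩) ?_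
  rintro _ ⟨x, rfl⟩
  obtain ⟨y, hy, z, hz, rfl⟩ := T.ker.exists_add_mem_mem_orthogonal x
  exact ⟨⟨z, hz⟩, by simp [show T y = 0 from hy]⟩

variable [NormedAddCommGroup E] [NormedSpace 𝕜 E] [CompleteSpace E]

theorem exists_comp_eq_of_range_subset {T : K →L[𝕜] F} {S : E →L[𝕜] F}
    (h : Set.range S ⊆ Set.range T) : ∃ D : E →L[𝕜] K, T.comp D = S := by
  obtain ⟨D, hD⟩ := exists_comp_eq_of_injective_of_range_subset
    (injective_comp_subtypeL_orthogonal_ker T) (h.trans (range_comp_subtypeL_orthogonal_ker T).ge)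
  exact ⟨T.kerᗮ.subtypeL.comp D, hD⟩

end Hilbert

end ContinuousLinearMap

theorem douglas_lemma {H E K : Type*}
    [NormedAddCommGroup H] [InnerProductSpace ℂ H] [CompleteSpace H]
    [NormedAddCommGroup E] [InnerProductSpace ℂ E] [CompleteSpace E]
    [NormedAddCommGroup K] [InnerProductSpace ℂ K] [CompleteSpace K]
    (A : H →L[ℂ] E) (B : H →L[ℂ] K)
    (h : Set.range (ContinuousLinearMap.adjoint A) ⊆ Set.range (ContinuousLinearMap.adjoint B)) :
    ∃ L : K →L[ℂ] E, A = L.comp B := by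
  obtain ⟨D, hD⟩ := ContinuousLinearMap.exists_comp_eq_of_range_subset h
  refine ⟨ContinuousLinearMap.adjoint D, ?_⟩
  rw [← ContinuousLinearMap.adjoint_adjoint A, ← hD, ContinuousLinearMap.adjoint_comp,
    ContinuousLinearMap.adjoint_adjoint]
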